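/- For a continuous set A ⊆ ℝ^N, if I is continuous, grows at least quadratically, and x* ∈ interior(A) minimizes I over A, then liminf_{ε→0} ε² · log ∫_A (2π ε² σ² Δt)^{-N/2} exp(-I(x)/ε²) dx ≥ -I(x*) (lower bound half of Laplace's method). -/

import Mathlib

/-!
Around an interior point `x*` the integrand is at least `exp (-(I x* + δ) / ε²)` on a small
ball, so `ε² log ∫_A` is at least `ε² log (vol ball) - (I x* + δ)` plus `ε²` times the log of
the normalising constant; both `ε²`-weighted logarithms vanish as `ε → 0`. Quadratic growth of
`I` makes the integrand integrable, so that the integral over `A` dominates the one over the ball.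
-/

open MeasureTheory Filter Real Topology

-- In `ℝ`, `liminf u f` is the junk value `0` when `u` is not cobounded, hence `L ≤ 0`.
theorem le_liminf_of_tendsto_of_eventuallyLE {α : Type*} {f : Filter α} [f.NeBot]
    {u g : α → ℝ} {L : ℝ} (hL : L ≤ 0) (hg : Tendsto g f (𝓝 L)) (hgu : g ≤ᶠ[f] u) :
    L ≤ liminf u f := by
  by_cases hcob : IsCoboundedUnder (· ≥ ·) f u
  · rw [← hg.liminf_eq]
    exact liminf_le_liminf hgu hg.isBoundedUnder_ge hcob
  · have hunbdd : ¬BddAbove {a | ∀ᶠ x in f, a ≤ u x} := fun ⟨b, hb⟩ =>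
      hcob ⟨b, fun a ha => hb (eventually_map.1 ha)⟩
    rwa [liminf_eq, Real.sSup_of_not_bddAbove hunbdd]

theorem tendsto_sq_mul_log_rpow_mul_sq {a : ℝ} (ha : 0 < a) (p : ℝ) :
    Tendsto (fun ε : ℝ => ε ^ 2 * log ((a * ε ^ 2) ^ p)) (𝓝 0) (𝓝 0) := by
  have hcont : Continuous fun s : ℝ => s * log (a * s) := by
    have h : (fun s : ℝ => s * log (a * s)) = fun s => s * log a + s * log s := by
      funext s
      rcases eq_or_ne s 0 with rfl | hs
      · simp
      · rw [log_mul ha.ne' hs]; ring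
    rw [h]
    exact (continuous_id.mul continuous_const).add continuous_mul_log
  have h : (fun ε : ℝ => ε ^ 2 * log ((a * ε ^ 2) ^ p)) =
      fun ε => p * (ε ^ 2 * log (a * ε ^ 2)) := by
    funext ε
    rcases eq_or_ne ε 0 with rfl | hε
    · simp
    · rw [log_rpow (by positivity)]; ring
  rw [h]
  simpa using ((hcont.comp (continuous_pow 2)).const_mul p).tendsto 0

theorem mul_sq_norm_sub_le_of_growth {E : Type*} [SeminormedAddCommGroup E] {φ : E → ℝ}
    (hφ : ∀ x, 0 ≤ φ x) {c R : ℝ} (hc : 0 ≤ c) (hR : ∀ x, R ≤ ‖x‖ → c * ‖x‖ ^ 2 ≤ φ x) (x : E) :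
    c * ‖x‖ ^ 2 - c * R ^ 2 ≤ φ x := by
  rcases le_or_gt R ‖x‖ with h | h
  · nlinarith [hR x h, sq_nonneg R]
  · nlinarith [hφ x, pow_le_pow_left₀ (norm_nonneg x) h.le 2]

section Gaussian

variable {V : Type*} [NormedAddCommGroup V] [InnerProductSpace ℝ V] [FiniteDimensional ℝ V]
  [MeasurableSpace V] [BorelSpace V]

theorem integrable_exp_neg_mul_sq_norm {b : ℝ} (hb : 0 < b) :
    Integrable fun v : V => exp (-b * ‖v‖ ^ 2) := by
  refine (GaussianFourier.integrable_cexp_neg_mul_sq_norm_add (V := V) (b := b)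
    (by simpa using hb) 0 0).norm.congr (Eventually.of_forall fun v => ?_)
  simp [Complex.norm_exp, ← Complex.ofReal_pow]

theorem integrable_exp_neg_div_of_mul_sq_norm_sub_le {φ : V → ℝ} (hφ : AEStronglyMeasurable φ)
    {c K s : ℝ} (hc : 0 < c) (hs : 0 < s) (hbound : ∀ x, c * ‖x‖ ^ 2 - K ≤ φ x) :
    Integrable fun x => exp (-φ x / s) := by
  refine ((integrable_exp_neg_mul_sq_norm (V := V) (div_pos hc hs)).const_mul (exp (K / s))).mono
    (by fun_prop) (Eventually.of_forall fun x => ?_)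
  rw [norm_of_nonneg (exp_pos _).le, norm_of_nonneg (by positivity), ← exp_add]
  refine exp_le_exp.2 ?_
  rw [div_le_iff₀ hs]
  have : (K / s + -(c / s) * ‖x‖ ^ 2) * s = K - c * ‖x‖ ^ 2 := by field_simp; ring
  linarith [hbound x]

end Gaussian

theorem sq_mul_log_add_le_sq_mul_log_setIntegral {α : Type*} [MeasurableSpace α] {μ : Measure α}
    {φ : α → ℝ} {A B : Set α} {C M ε : ℝ} (hC : 0 < C) (hε : ε ≠ 0) (hB : MeasurableSet B)
    (hBA : B ⊆ A) (hμB₀ : μ B ≠ 0) (hμB : μ B ≠ ⊤)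
    (hint : IntegrableOn (fun x => exp (-φ x / ε ^ 2)) A μ) (hφ : ∀ x ∈ B, φ x ≤ M) :
    ε ^ 2 * log C + (ε ^ 2 * log (μ.real B) - M) ≤
      ε ^ 2 * log (∫ x in A, C * exp (-φ x / ε ^ 2) ∂μ) := by
  have hε2 : 0 < ε ^ 2 := by positivity
  have hvol : 0 < μ.real B := ENNReal.toReal_pos hμB₀ hμB
  have hball : exp (-M / ε ^ 2) * μ.real B ≤ ∫ x in B, exp (-φ x / ε ^ 2) ∂μ :=
    setIntegral_ge_of_const_le_real hB hμB
      (fun x hx => exp_le_exp.2 (div_le_div_of_nonneg_right (neg_le_neg (hφ x hx)) hε2.le))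
      (hint.mono_set hBA)
  have hmono : ∫ x in B, exp (-φ x / ε ^ 2) ∂μ ≤ ∫ x in A, exp (-φ x / ε ^ 2) ∂μ :=
    setIntegral_mono_set hint (Eventually.of_forall fun _ => (exp_pos _).le) hBA.eventuallyLE
  have hpos : 0 < exp (-M / ε ^ 2) * μ.real B := by positivity
  have hlog : log (μ.real B) - M / ε ^ 2 ≤ log (∫ x in A, exp (-φ x / ε ^ 2) ∂μ) := by
    calc log (μ.real B) - M / ε ^ 2 = log (exp (-M / ε ^ 2) * μ.real B) := by
          rw [log_mul (exp_pos _).ne' hvol.ne', log_exp]; ring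
      _ ≤ _ := log_le_log hpos (hball.trans hmono)
  rw [integral_const_mul, log_mul hC.ne' (hpos.trans_le (hball.trans hmono)).ne', mul_add]
  have := mul_le_mul_of_nonneg_left hlog hε2.le
  rw [mul_sub, mul_div_cancel₀ _ hε2.ne'] at this
  linarith

theorem laplace_lower_bound_general
    (N : ℕ) (σ Δt : ℝ) (hσ : 0 < σ) (hΔt : 0 < Δt)
    (I : EuclideanSpace ℝ (Fin N) → ℝ) (hI : Continuous I)
    (hInonneg : ∀ x, 0 ≤ I x)
    (hgrowth : ∃ c > (0:ℝ), ∃ R : ℝ, ∀ x, R ≤ ‖x‖ → c * ‖x‖ ^ 2 ≤ I x)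
    (A : Set (EuclideanSpace ℝ (Fin N)))
    (xstar : EuclideanSpace ℝ (Fin N)) (hxstar : xstar ∈ interior A) :
    -(I xstar) ≤
      Filter.liminf
        (fun ε : ℝ =>
          ε ^ 2 *
            Real.log (∫ x in A,
              (2 * π * ε ^ 2 * σ ^ 2 * Δt) ^ (-(N : ℝ) / 2) * Real.exp (-(I x) / ε ^ 2)))
        (nhdsWithin 0 (Set.Ioi 0)) := by
  obtain ⟨c, hc, R, hR⟩ := hgrowth
  refine le_of_forall_pos_le_add fun δ hδ => ?_
  have hnear : ∀ᶠ y in 𝓝 xstar, y ∈ A ∧ I y < I xstar + δ :=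
    Eventually.and (mem_interior_iff_mem_nhds.1 hxstar)
      (hI.continuousAt.eventually (gt_mem_nhds (lt_add_of_pos_right (I xstar) hδ)))
  obtain ⟨r, hr, hball⟩ := Metric.eventually_nhds_iff_ball.1 hnear
  have hnormalising : Tendsto
      (fun ε : ℝ => ε ^ 2 * log ((2 * π * ε ^ 2 * σ ^ 2 * Δt) ^ (-(N : ℝ) / 2))) (𝓝[>] 0) (𝓝 0) := by
    simp only [show ∀ ε : ℝ, 2 * π * ε ^ 2 * σ ^ 2 * Δt = 2 * π * σ ^ 2 * Δt * ε ^ 2 from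
      fun ε => by ring]
    exact (tendsto_sq_mul_log_rpow_mul_sq (by positivity) _).mono_left nhdsWithin_le_nhds
  have hvolume : Tendsto (fun ε : ℝ => ε ^ 2 * log (volume.real (Metric.ball xstar r)))
      (𝓝[>] 0) (𝓝 0) := by
    have hcont : Continuous fun ε : ℝ => ε ^ 2 * log (volume.real (Metric.ball xstar r)) := by
      fun_prop
    exact (hcont.tendsto' 0 0 (by simp)).mono_left nhdsWithin_le_nhds
  have hlower := le_liminf_of_tendsto_of_eventuallyLE (L := -(I xstar + δ))
    (by linarith [hInonneg xstar])
    (by simpa using hnormalising.add (hvolume.sub_const (I xstar + δ))) <| by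
    filter_upwards [self_mem_nhdsWithin] with ε (hε : 0 < ε)
    exact sq_mul_log_add_le_sq_mul_log_setIntegral (by positivity) hε.ne' measurableSet_ball
      (fun x hx => (hball x hx).1) (Metric.measure_ball_pos volume xstar hr).ne'
      measure_ball_lt_top.ne
      (integrable_exp_neg_div_of_mul_sq_norm_sub_le hI.aestronglyMeasurable hc (by positivity)
        (mul_sq_norm_sub_le_of_growth hInonneg hc.le hR)).integrableOn
      (fun x hx => (hball x hx).2.le)
  linarith

/-- Lower bound half of Laplace's method: under the same hypotheses,
`liminf_{ε→0⁺} ε² log ∫_A (2πε²σ²Δt)^{-N/2} exp(-I(x)/ε²) dx ≥ -I(x*)`. -/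
theorem laplace_lower_bound
    (N : ℕ) (hN : 0 < N) (σ Δt : ℝ) (hσ : 0 < σ) (hΔt : 0 < Δt)
    (I : EuclideanSpace ℝ (Fin N) → ℝ) (hI : Continuous I)
    (hInonneg : ∀ x, 0 ≤ I x)
    (hgrowth : ∃ c > (0:ℝ), ∃ R : ℝ, ∀ x, R ≤ ‖x‖ → c * ‖x‖ ^ 2 ≤ I x)
    (A : Set (EuclideanSpace ℝ (Fin N))) (hA : MeasurableSet A)
    (xstar : EuclideanSpace ℝ (Fin N)) (hxstar : xstar ∈ interior A)
    (hmin : ∀ x ∈ A, I xstar ≤ I x) :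
    -(I xstar) ≤
      Filter.liminf
        (fun ε : ℝ =>
          ε ^ 2 *
            Real.log (∫ x in A,
              (2 * π * ε ^ 2 * σ ^ 2 * Δt) ^ (-(N : ℝ) / 2) * Real.exp (-(I x) / ε ^ 2)))
        (nhdsWithin 0 (Set.Ioi 0)) :=
  laplace_lower_bound_general N σ Δt hσ hΔt I hI hInonneg hgrowth A xstar hxstar
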